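/- Let φ ∈ L²(D) and let u be its harmonic-type extension: u = φ on D and Hu(x) = μ(x)⁻¹∫_D k(x,y)φ(y) dy for x outside the closure of D. Then Ê(Hu, Hu) = (1/2)∬_{D×D}(φ(x)−φ(y))²(k(x,y) + k̂(x,y)) dy dx, where k̂(x,y) = ∫_{D^c} k(x,z)k(z,y)/μ(z) dz. -/

import Mathlib

open MeasureTheory Set
open scoped ENNReal

noncomputable section

abbrev Euc (d : ℕ) := EuclideanSpace ℝ (Fin d)

def muR (d : ℕ) (D : Set (Euc d)) (k : Euc d → Euc d → ℝ) (z : Euc d) : ℝ :=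
  ∫ w in D, k z w

def kappaR (d : ℕ) (D : Set (Euc d)) (k : Euc d → Euc d → ℝ) (x : Euc d) : ℝ :=
  ∫ y in Dᶜ, k x y

/-- `k̂(x,y) = ∫_{Dᶜ} k(x,z)k(z,y)/μ(z) dz` (real-valued). -/
def khatR (d : ℕ) (D : Set (Euc d)) (k : Euc d → Euc d → ℝ) (x y : Euc d) : ℝ :=
  ∫ z in Dᶜ, k x z * k z y / muR d D k z

/-- The energy `Ê(v,v) = (1/2)∬_{D×D}(v(x)-v(y))²k dy dx + ∬_{D×Dᶜ}(v(x)-v(y))²k dy dx`. -/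
def hatEsplit (d : ℕ) (D : Set (Euc d)) (k : Euc d → Euc d → ℝ) (v : Euc d → ℝ) : ℝ :=
  (1 / 2 : ℝ) * (∫ x in D, ∫ y in D, (v x - v y) ^ 2 * k x y) +
    ∫ x in D, ∫ y in Dᶜ, (v x - v y) ^ 2 * k x y

/-! For `z` outside `closure D`, `Hu(z)` is the `k(z, ·)`-weighted mean of `φ` over `D`, so the
weighted variance identity gives
`∫_D (φ x - Hu z)² k(x, z) dx = ½ ∬_{D×D} (φ x - φ y)² k(x, z) k(z, y) / μ(z)`.
Since `|∂D| = 0`, almost every `z ∈ Dᶜ` lies outside `closure D`. Integrating over `z ∈ Dᶜ` and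
exchanging the order of integration (the integrand is nonnegative, so Tonelli reduces its
integrability to the finiteness of the exterior energy) turns the `D × Dᶜ` part of `Ê(Hu, Hu)` into
`½ ∬_{D×D} (φ x - φ y)² k̂(x, y)`; the `D × D` part is unchanged because `Hu = φ` on `D`. -/

theorem integral_sq_sub_weightedMean_mul {α : Type*} [MeasurableSpace α] {ν : Measure α}
    [SFinite ν] {w φ : α → ℝ} (hw : Integrable w ν) (hwφ : Integrable (fun x => w x * φ x) ν)
    (hwφ2 : Integrable (fun x => w x * φ x ^ 2) ν) (hm : ∫ x, w x ∂ν ≠ 0) :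
    ∫ x, (φ x - (∫ x, w x ∂ν)⁻¹ * ∫ x, w x * φ x ∂ν) ^ 2 * w x ∂ν =
      1 / 2 * ∫ p, (φ p.1 - φ p.2) ^ 2 * (w p.1 * w p.2 / ∫ x, w x ∂ν) ∂ν.prod ν := by
  set m := ∫ x, w x ∂ν
  set S₁ := ∫ x, w x * φ x ∂ν
  set S₂ := ∫ x, w x * φ x ^ 2 ∂ν
  set c := m⁻¹ * S₁
  have hlhs : ∫ x, (φ x - c) ^ 2 * w x ∂ν = S₂ - 2 * c * S₁ + c ^ 2 * m := by
    calc ∫ x, (φ x - c) ^ 2 * w x ∂ν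
        = ∫ x, (w x * φ x ^ 2 - 2 * c * (w x * φ x) + c ^ 2 * w x) ∂ν := by
          congr 1; ext x; ring
      _ = S₂ - 2 * c * S₁ + c ^ 2 * m := by
          have hsub : Integrable (fun x => w x * φ x ^ 2 - 2 * c * (w x * φ x)) ν :=
            hwφ2.sub (hwφ.const_mul _)
          rw [integral_add hsub (hw.const_mul _),
            integral_sub hwφ2 (hwφ.const_mul _), integral_const_mul, integral_const_mul]
  have hrhs : ∫ p, (φ p.1 - φ p.2) ^ 2 * (w p.1 * w p.2 / m) ∂ν.prod ν =
      m⁻¹ * (S₂ * m) - 2 * m⁻¹ * (S₁ * S₁) + m⁻¹ * (m * S₂) := by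
    have h₁ := hwφ2.mul_prod hw
    have h₂ := hwφ.mul_prod hwφ
    have h₃ := hw.mul_prod hwφ2
    calc ∫ p, (φ p.1 - φ p.2) ^ 2 * (w p.1 * w p.2 / m) ∂ν.prod ν
        = ∫ p, (m⁻¹ * (w p.1 * φ p.1 ^ 2 * w p.2)
            - 2 * m⁻¹ * (w p.1 * φ p.1 * (w p.2 * φ p.2))
            + m⁻¹ * (w p.1 * (w p.2 * φ p.2 ^ 2))) ∂ν.prod ν := by
          congr 1; ext p; ring
      _ = _ := by
          have hsub : Integrable (fun p : α × α => m⁻¹ * (w p.1 * φ p.1 ^ 2 * w p.2)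
              - 2 * m⁻¹ * (w p.1 * φ p.1 * (w p.2 * φ p.2))) (ν.prod ν) :=
            (h₁.const_mul _).sub (h₂.const_mul _)
          rw [integral_add hsub (h₃.const_mul _),
            integral_sub (h₁.const_mul _) (h₂.const_mul _), integral_const_mul,
            integral_const_mul, integral_const_mul,
            integral_prod_mul (fun x => w x * φ x ^ 2) w,
            integral_prod_mul (fun x => w x * φ x) (fun x => w x * φ x),
            integral_prod_mul w (fun x => w x * φ x ^ 2)]
  rw [hlhs, hrhs]
  simp only [c]
  field_simp
  ring

theorem ae_restrict_compl_notMem_closure {α : Type*} [TopologicalSpace α] [MeasurableSpace α]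
    [OpensMeasurableSpace α] {μ : Measure α} {D : Set α} (hD : IsOpen D)
    (hfr : μ (frontier D) = 0) : ∀ᵐ y ∂μ.restrict Dᶜ, y ∉ closure D := by
  rw [ae_restrict_iff' hD.measurableSet.compl]
  refine measure_mono_null (fun y hy => ?_) hfr
  simpa [hD.frontier_eq, and_comm] using hy

def khatIntegrand (d : ℕ) (D : Set (Euc d)) (k : Euc d → Euc d → ℝ) (φ : Euc d → ℝ)
    (p : Euc d × Euc d) (z : Euc d) : ℝ :=
  (φ p.1 - φ p.2) ^ 2 * (k p.1 z * k z p.2 / muR d D k z)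

section Kernel

variable {d : ℕ} {D : Set (Euc d)} {k : Euc d → Euc d → ℝ} {φ : Euc d → ℝ}

theorem integral_khatIntegrand_compl (p : Euc d × Euc d) :
    ∫ z in Dᶜ, khatIntegrand d D k φ p z = (φ p.1 - φ p.2) ^ 2 * khatR d D k p.1 p.2 :=
  integral_const_mul _ _

theorem khatIntegrand_nonneg (hk : ∀ x y, 0 ≤ k x y) (p : Euc d × Euc d) (z : Euc d) :
    0 ≤ khatIntegrand d D k φ p z :=
  mul_nonneg (sq_nonneg _) <| div_nonneg (mul_nonneg (hk _ _) (hk _ _)) <|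
    integral_nonneg fun w => hk z w

theorem measurable_khatIntegrand (hk : Measurable (Function.uncurry k)) (hφ : Measurable φ) :
    Measurable (Function.uncurry (khatIntegrand d D k φ)) := by
  have hμ : Measurable (muR d D k) :=
    (hk.stronglyMeasurable.integral_prod_right' (ν := volume.restrict D)).measurable
  exact (((hφ.comp measurable_fst.fst).sub (hφ.comp measurable_fst.snd)).pow_const 2).mul
    (((hk.comp (measurable_fst.fst.prodMk measurable_snd)).mul
      (hk.comp (measurable_snd.prodMk measurable_fst.snd))).div (hμ.comp measurable_snd))

theorem integrable_khatIntegrand_of_integrableOn (hksymm : ∀ x y, k x y = k y x)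
    (hφ : Measurable φ) {M : ℝ} (hM : ∀ x, |φ x| ≤ M) {z : Euc d}
    (hkz : IntegrableOn (k z) D) :
    Integrable (fun p => khatIntegrand d D k φ p z)
      ((volume.restrict D).prod (volume.restrict D)) := by
  have hkk : Integrable (fun p : Euc d × Euc d => k p.1 z * k z p.2 / muR d D k z)
      ((volume.restrict D).prod (volume.restrict D)) := by
    refine ((hkz.mul_const (muR d D k z)⁻¹).mul_prod hkz).congr (ae_of_all _ fun p => ?_)
    simp only [hksymm p.1 z, div_eq_mul_inv, mul_right_comm]
  refine hkk.bdd_mul (c := (2 * M) ^ 2)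
    (((hφ.comp measurable_fst).sub (hφ.comp measurable_snd)).pow_const 2).aestronglyMeasurable
    (ae_of_all _ fun p => ?_)
  rw [Real.norm_eq_abs, abs_pow]
  refine pow_le_pow_left₀ (abs_nonneg _) ?_ 2
  have h₁ := abs_le.mp (hM p.1)
  have h₂ := abs_le.mp (hM p.2)
  exact abs_le.mpr ⟨by linarith, by linarith⟩

theorem integrable_khatIntegrand (hk : Measurable (Function.uncurry k))
    (hk0 : ∀ x y, 0 ≤ k x y) (hφ : Measurable φ)
    (hslice : ∀ᵐ z ∂volume.restrict Dᶜ, Integrable (fun p => khatIntegrand d D k φ p z)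
      ((volume.restrict D).prod (volume.restrict D)))
    (hint : Integrable (fun z => ∫ p, khatIntegrand d D k φ p z
      ∂(volume.restrict D).prod (volume.restrict D)) (volume.restrict Dᶜ)) :
    Integrable (Function.uncurry (khatIntegrand d D k φ))
      (((volume.restrict D).prod (volume.restrict D)).prod (volume.restrict Dᶜ)) := by
  refine (integrable_prod_iff' (measurable_khatIntegrand hk hφ).aestronglyMeasurable).mpr
    ⟨hslice, hint.congr (ae_of_all _ fun z => integral_congr_ae (ae_of_all _ fun p => ?_))⟩
  exact (Real.norm_of_nonneg (khatIntegrand_nonneg hk0 p z)).symm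

theorem integrable_sq_sub_mul_khatR
    (hG : Integrable (Function.uncurry (khatIntegrand d D k φ))
      (((volume.restrict D).prod (volume.restrict D)).prod (volume.restrict Dᶜ))) :
    Integrable (fun p : Euc d × Euc d => (φ p.1 - φ p.2) ^ 2 * khatR d D k p.1 p.2)
      ((volume.restrict D).prod (volume.restrict D)) :=
  hG.integral_prod_left.congr (ae_of_all _ integral_khatIntegrand_compl)

theorem integral_sq_sub_mul_khatR
    (hG : Integrable (Function.uncurry (khatIntegrand d D k φ))
      (((volume.restrict D).prod (volume.restrict D)).prod (volume.restrict Dᶜ))) :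
    ∫ p, (φ p.1 - φ p.2) ^ 2 * khatR d D k p.1 p.2
        ∂(volume.restrict D).prod (volume.restrict D) =
      ∫ z in Dᶜ, ∫ p, khatIntegrand d D k φ p z
        ∂(volume.restrict D).prod (volume.restrict D) := by
  simp only [← integral_khatIntegrand_compl]
  exact integral_integral_swap hG

theorem integral_sq_sub_harmonicExt_mul (hD : MeasurableSet D) (hksymm : ∀ x y, k x y = k y x)
    (hφ : Measurable φ) {M : ℝ} (hM : ∀ x, |φ x| ≤ M) {v : Euc d → ℝ}
    (hvD : ∀ x ∈ D, v x = φ x) {z : Euc d}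
    (hvz : v z = (muR d D k z)⁻¹ * ∫ y in D, k z y * φ y)
    (hkz : IntegrableOn (k z) D) (hμz : muR d D k z ≠ 0) :
    ∫ x in D, (v x - v z) ^ 2 * k x z =
      1 / 2 * ∫ p, khatIntegrand d D k φ p z ∂(volume.restrict D).prod (volume.restrict D) := by
  have hφbdd : ∀ x, ‖φ x‖ ≤ M := hM
  have hkφ : IntegrableOn (fun x => k z x * φ x) D :=
    (hkz.bdd_mul hφ.aestronglyMeasurable (ae_of_all _ hφbdd)).congr
      (ae_of_all _ fun x => mul_comm _ _)
  have hkφ2 : IntegrableOn (fun x => k z x * φ x ^ 2) D :=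
    (hkz.bdd_mul (hφ.pow_const 2).aestronglyMeasurable (c := M ^ 2) (ae_of_all _ fun x => by
      rw [norm_pow]; exact pow_le_pow_left₀ (norm_nonneg _) (hφbdd x) 2)).congr
      (ae_of_all _ fun x => mul_comm _ _)
  calc ∫ x in D, (v x - v z) ^ 2 * k x z
      = ∫ x in D, (φ x - (muR d D k z)⁻¹ * ∫ y in D, k z y * φ y) ^ 2 * k z x :=
        setIntegral_congr_fun hD fun x hx => by rw [hvD x hx, hvz, hksymm]
    _ = 1 / 2 * ∫ p, (φ p.1 - φ p.2) ^ 2 * (k z p.1 * k z p.2 / muR d D k z)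
          ∂(volume.restrict D).prod (volume.restrict D) :=
        integral_sq_sub_weightedMean_mul hkz hkφ hkφ2 hμz
    _ = _ := by
        congr 1; congr 1; ext p; rw [khatIntegrand, hksymm p.1 z]

end Kernel

theorem statement19_general (d : ℕ)
    (D : Set (Euc d)) (hDopen : IsOpen D) (hbd : volume (frontier D) = 0)
    (k : Euc d → Euc d → ℝ) (hkmeas : Measurable (Function.uncurry k))
    (hkpos : ∀ x y, 0 < k x y) (hksymm : ∀ x y, k x y = k y x)
    (hkD : ∀ z ∉ closure D, IntegrableOn (fun w => k z w) D volume ∧ 0 < muR d D k z)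
    (φ : Euc d → ℝ) (hφmeas : Measurable φ) (hφbdd : ∃ M : ℝ, ∀ x, |φ x| ≤ M)
    (v : Euc d → ℝ)
    -- `v = Hu` is the harmonic-type extension of `φ`:
    (hvD : ∀ x ∈ D, v x = φ x)
    (hvDc : ∀ x ∉ closure D, v x = (muR d D k x)⁻¹ * ∫ y in D, k x y * φ y)
    -- absolute convergence of the energy integrals:
    (hE1 : Integrable (fun q : Euc d × Euc d => (φ q.1 - φ q.2) ^ 2 * k q.1 q.2)
      ((volume.restrict D).prod (volume.restrict D)))
    (hE2 : Integrable (fun q : Euc d × Euc d => (v q.1 - v q.2) ^ 2 * k q.1 q.2)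
      ((volume.restrict D).prod (volume.restrict Dᶜ))) :
    hatEsplit d D k v =
      (1 / 2 : ℝ) * ∫ x in D, ∫ y in D,
        (φ x - φ y) ^ 2 * (k x y + khatR d D k x y) := by
  obtain ⟨M, hM⟩ := hφbdd
  have hDm : MeasurableSet D := hDopen.measurableSet
  have hext := ae_restrict_compl_notMem_closure hDopen hbd
  have hkey : ∀ᵐ z ∂volume.restrict Dᶜ, ∫ x in D, (v x - v z) ^ 2 * k x z =
      1 / 2 * ∫ p, khatIntegrand d D k φ p z ∂(volume.restrict D).prod (volume.restrict D) :=
    hext.mono fun z hz => integral_sq_sub_harmonicExt_mul hDm hksymm hφmeas hM hvD (hvDc z hz)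
      (hkD z hz).1 (hkD z hz).2.ne'
  have hG := integrable_khatIntegrand hkmeas (fun x y => (hkpos x y).le) hφmeas
    (hext.mono fun z hz => integrable_khatIntegrand_of_integrableOn hksymm hφmeas hM (hkD z hz).1)
    ((hE2.integral_prod_right.const_mul 2).congr (hkey.mono fun z hz => by simp only [hz]; ring))
  have hK := integrable_sq_sub_mul_khatR hG
  have hinterior : ∫ x in D, ∫ y in D, (v x - v y) ^ 2 * k x y =
      ∫ p, (φ p.1 - φ p.2) ^ 2 * k p.1 p.2 ∂(volume.restrict D).prod (volume.restrict D) := by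
    rw [integral_prod _ hE1]
    exact setIntegral_congr_fun hDm fun x hx => setIntegral_congr_fun hDm fun y hy => by
      rw [hvD x hx, hvD y hy]
  have hexterior : ∫ x in D, ∫ y in Dᶜ, (v x - v y) ^ 2 * k x y =
      1 / 2 * ∫ p, (φ p.1 - φ p.2) ^ 2 * khatR d D k p.1 p.2
        ∂(volume.restrict D).prod (volume.restrict D) := by
    rw [integral_integral_swap hE2, integral_congr_ae hkey, integral_const_mul,
      integral_sq_sub_mul_khatR hG]
  have hsplit : ∫ x in D, ∫ y in D, (φ x - φ y) ^ 2 * (k x y + khatR d D k x y) =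
      ∫ p, (φ p.1 - φ p.2) ^ 2 * k p.1 p.2 ∂(volume.restrict D).prod (volume.restrict D) +
        ∫ p, (φ p.1 - φ p.2) ^ 2 * khatR d D k p.1 p.2
          ∂(volume.restrict D).prod (volume.restrict D) := by
    simp only [mul_add]
    rw [← integral_add hE1 hK]
    exact (integral_prod _ (hE1.add hK)).symm
  rw [hatEsplit, hinterior, hexterior, hsplit]
  ring

/-- for the harmonic-type extension `Hu` of `φ` (equal to `φ` on `D` and to
`μ(x)⁻¹∫_D k(x,y)φ(y)dy` outside the closure of `D`),
`Ê(Hu,Hu) = (1/2)∬_{D×D}(φ(x)−φ(y))²(k(x,y)+k̂(x,y)) dy dx`. -/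
theorem statement19 (d : ℕ)
    (D : Set (Euc d)) (hDopen : IsOpen D) (hDne : D.Nonempty)
    (hDbdd : Bornology.IsBounded D) (hbd : volume (frontier D) = 0)
    (k : Euc d → Euc d → ℝ) (hkmeas : Measurable (Function.uncurry k))
    (hkpos : ∀ x y, 0 < k x y) (hksymm : ∀ x y, k x y = k y x)
    (hkD : ∀ z ∉ closure D, IntegrableOn (fun w => k z w) D volume ∧ 0 < muR d D k z)
    (hkDc : ∀ x ∈ D, IntegrableOn (fun y => k x y) Dᶜ volume)
    (hκInt : IntegrableOn (kappaR d D k) D volume)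
    (hkhmarg : ∀ x ∈ D, (∫ y in D, khatR d D k x y) = kappaR d D k x)
    (φ : Euc d → ℝ) (hφmeas : Measurable φ) (hφbdd : ∃ M : ℝ, ∀ x, |φ x| ≤ M)
    (v : Euc d → ℝ) (hvmeas : Measurable v)
    -- `v = Hu` is the harmonic-type extension of `φ`:
    (hvD : ∀ x ∈ D, v x = φ x)
    (hvDc : ∀ x ∉ closure D, v x = (muR d D k x)⁻¹ * ∫ y in D, k x y * φ y)
    (hvb : ∀ x ∈ frontier D, v x = 0)
    -- absolute convergence of the energy integrals:
    (hE1 : Integrable (fun q : Euc d × Euc d => (φ q.1 - φ q.2) ^ 2 * k q.1 q.2)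
      ((volume.restrict D).prod (volume.restrict D)))
    (hE2 : Integrable (fun q : Euc d × Euc d => (v q.1 - v q.2) ^ 2 * k q.1 q.2)
      ((volume.restrict D).prod (volume.restrict Dᶜ))) :
    hatEsplit d D k v =
      (1 / 2 : ℝ) * ∫ x in D, ∫ y in D,
        (φ x - φ y) ^ 2 * (k x y + khatR d D k x y) :=
  statement19_general d D hDopen hbd k hkmeas hkpos hksymm hkD φ hφmeas hφbdd v hvD hvDc hE1 hE2
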